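/- Bijective routing invariant (Observation 1): if the internal routing of each of two substructures is a bijection from its input terminals {L, BACK} to its output terminals {YES, NO}, then the combined routing produced by either the universal or the existential gadget wiring is again a bijection from the combined inputs {L, BACK_out} to the combined outputs {YES_out, NO_out}; in particular the combined structure has no internal dead ends. -/
import Mathlib


/-- Input terminals of a substructure. -/
inductive Term where
  | L | BACK
deriving DecidableEq

/-- Output terminals of a substructure. -/
inductive OutT where
  | YES | NO
deriving DecidableEq

/-- Nodes of the combined gadget: the combined terminals together with the
input and output terminals of the two substructures `S₀` and `S₁`. -/
inductive GNode where
  | inL | inBACK | outYES | outNO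
  | inp : Fin 2 → Term → GNode
  | out : Fin 2 → OutT → GNode
deriving DecidableEq

/-- Combined input terminals as nodes. -/
def inNode : Term → GNode
  | .L => .inL
  | .BACK => .inBACK

/-- Combined output terminals as nodes. -/
def outNode : OutT → GNode
  | .YES => .outYES
  | .NO => .outNO

/-- The universal gadget: wiring `L → L₀`, `YES₀ → L₁`, `NO₀ → NO_out`,
`YES₁ → YES_out`, `NO₁ → BACK₀`, `BACK_out → BACK₁` together with the internal
routings `r0`, `r1`. -/
inductive uEdge (r0 r1 : Term → OutT) : GNode → GNode → Prop where
  | wire_inL : uEdge r0 r1 .inL (.inp 0 .L)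
  | wire_yes0 : uEdge r0 r1 (.out 0 .YES) (.inp 1 .L)
  | wire_no0 : uEdge r0 r1 (.out 0 .NO) .outNO
  | wire_yes1 : uEdge r0 r1 (.out 1 .YES) .outYES
  | wire_no1 : uEdge r0 r1 (.out 1 .NO) (.inp 0 .BACK)
  | wire_back : uEdge r0 r1 .inBACK (.inp 1 .BACK)
  | route0 (t : Term) : uEdge r0 r1 (.inp 0 t) (.out 0 (r0 t))
  | route1 (t : Term) : uEdge r0 r1 (.inp 1 t) (.out 1 (r1 t))

/-- The existential gadget: wiring `L → L₀`, `NO₀ → L₁`, `YES₀ → YES_out`,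
`NO₁ → NO_out`, `YES₁ → BACK₀`, `BACK_out → BACK₁` together with the internal
routings `r0`, `r1`. -/
inductive eEdge (r0 r1 : Term → OutT) : GNode → GNode → Prop where
  | wire_inL : eEdge r0 r1 .inL (.inp 0 .L)
  | wire_no0 : eEdge r0 r1 (.out 0 .NO) (.inp 1 .L)
  | wire_yes0 : eEdge r0 r1 (.out 0 .YES) .outYES
  | wire_no1 : eEdge r0 r1 (.out 1 .NO) .outNO
  | wire_yes1 : eEdge r0 r1 (.out 1 .YES) (.inp 0 .BACK)
  | wire_back : eEdge r0 r1 .inBACK (.inp 1 .BACK)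
  | route0 (t : Term) : eEdge r0 r1 (.inp 0 t) (.out 0 (r0 t))
  | route1 (t : Term) : eEdge r0 r1 (.inp 1 t) (.out 1 (r1 t))

/-- The "identity" routing. -/
def idR : Term → OutT
  | .L => .YES
  | .BACK => .NO

/-- The "swap" routing. -/
def swR : Term → OutT
  | .L => .NO
  | .BACK => .YES

lemma bij_cases (r : Term → OutT) (h : Function.Bijective r) : r = idR ∨ r = swR := by
  rcases hL : r .L with _ | _ <;> rcases hB : r .BACK with _ | _
  · exact absurd (h.1 (hL.trans hB.symm)) (by decide)
  · left; funext t; cases t <;> simp [idR, hL, hB]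
  · right; funext t; cases t <;> simp [swR, hL, hB]
  · exact absurd (h.1 (hL.trans hB.symm)) (by decide)

lemma idR_bij : Function.Bijective idR :=
  ⟨fun a b h => by cases a <;> cases b <;> simp_all [idR],
   fun o => by cases o; exacts [⟨.L, rfl⟩, ⟨.BACK, rfl⟩]⟩

lemma swR_bij : Function.Bijective swR :=
  ⟨fun a b h => by cases a <;> cases b <;> simp_all [swR],
   fun o => by cases o; exacts [⟨.BACK, rfl⟩, ⟨.L, rfl⟩]⟩

lemma outNode_inj : Function.Injective outNode := by
  intro a b h; cases a <;> cases b <;> simp_all [outNode]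

lemma path_unique {R : GNode → GNode → Prop}
    (hdet : ∀ {a b c}, R a b → R a c → b = c)
    (hterm : ∀ (o : OutT) b, ¬ R (outNode o) b) :
    ∀ {x : GNode} {o o' : OutT}, Relation.ReflTransGen R x (outNode o) →
      Relation.ReflTransGen R x (outNode o') → o = o' := by
  intro x o o' h
  induction h using Relation.ReflTransGen.head_induction_on with
  | refl =>
    intro h'
    rcases h'.cases_head with h' | ⟨c, hc, _⟩
    · exact outNode_inj h'
    · exact absurd hc (hterm o c)
  | head h' _ ih =>
    rename_i a c
    intro h2
    rcases h2.cases_head with h2 | ⟨c', hc', hp'⟩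
    · exact absurd (h2 ▸ h') (hterm o' _)
    · exact ih (hdet h' hc' ▸ hp')

lemma uEdge_det {r0 r1 : Term → OutT} {a b c : GNode}
    (hb : uEdge r0 r1 a b) (hc : uEdge r0 r1 a c) : b = c := by
  cases hb <;> cases hc <;> simp_all

lemma uEdge_term (r0 r1 : Term → OutT) (o : OutT) (b : GNode) :
    ¬ uEdge r0 r1 (outNode o) b := by
  cases o <;> intro h <;> cases h

lemma eEdge_det {r0 r1 : Term → OutT} {a b c : GNode}
    (hb : eEdge r0 r1 a b) (hc : eEdge r0 r1 a c) : b = c := by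
  cases hb <;> cases hc <;> simp_all

lemma eEdge_term (r0 r1 : Term → OutT) (o : OutT) (b : GNode) :
    ¬ eEdge r0 r1 (outNode o) b := by
  cases o <;> intro h <;> cases h

/-- Bijective routing invariant (Observation 1): if the internal routings of
the two substructures are bijections from inputs to outputs, then for either
gadget the combined routing is again a bijection from the combined inputs
`{L, BACK_out}` to the combined outputs `{YES_out, NO_out}`: following from
each combined input terminates at a unique combined output, and the resulting
map is a bijection. -/
theorem combined_routing_bijective (r0 r1 : Term → OutT)
    (h0 : Function.Bijective r0) (h1 : Function.Bijective r1) :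
    (∃ f : Term → OutT, Function.Bijective f ∧
      (∀ t : Term, Relation.ReflTransGen (uEdge r0 r1) (inNode t) (outNode (f t))) ∧
      (∀ (t : Term) (o : OutT),
        Relation.ReflTransGen (uEdge r0 r1) (inNode t) (outNode o) → o = f t)) ∧
    (∃ f : Term → OutT, Function.Bijective f ∧
      (∀ t : Term, Relation.ReflTransGen (eEdge r0 r1) (inNode t) (outNode (f t))) ∧
      (∀ (t : Term) (o : OutT),
        Relation.ReflTransGen (eEdge r0 r1) (inNode t) (outNode o) → o = f t)) := by
  rcases bij_cases r0 h0 with rfl | rfl <;> rcases bij_cases r1 h1 with rfl | rfl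
  · -- (id, id)
    have pu : ∀ t, Relation.ReflTransGen (uEdge idR idR) (inNode t) (outNode (idR t)) := by
      intro t; cases t
      · exact .head .wire_inL (.head (.route0 .L) (.head .wire_yes0 (.head (.route1 .L)
          (.single .wire_yes1))))
      · exact .head .wire_back (.head (.route1 .BACK) (.head .wire_no1 (.head (.route0 .BACK)
          (.single .wire_no0))))
    have pe : ∀ t, Relation.ReflTransGen (eEdge idR idR) (inNode t) (outNode (idR t)) := by
      intro t; cases t
      · exact .head .wire_inL (.head (.route0 .L) (.single .wire_yes0))
      · exact .head .wire_back (.head (.route1 .BACK) (.single .wire_no1))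
    exact ⟨⟨idR, idR_bij, pu, fun t o h => path_unique (R := uEdge _ _) uEdge_det (uEdge_term _ _) h (pu t)⟩,
      ⟨idR, idR_bij, pe, fun t o h => path_unique (R := eEdge _ _) eEdge_det (eEdge_term _ _) h (pe t)⟩⟩
  · -- (id, sw)
    have pu : ∀ t, Relation.ReflTransGen (uEdge idR swR) (inNode t) (outNode (swR t)) := by
      intro t; cases t
      · exact .head .wire_inL (.head (.route0 .L) (.head .wire_yes0 (.head (.route1 .L)
          (.head .wire_no1 (.head (.route0 .BACK) (.single .wire_no0))))))
      · exact .head .wire_back (.head (.route1 .BACK) (.single .wire_yes1))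
    have pe : ∀ t, Relation.ReflTransGen (eEdge idR swR) (inNode t) (outNode (idR t)) := by
      intro t; cases t
      · exact .head .wire_inL (.head (.route0 .L) (.single .wire_yes0))
      · exact .head .wire_back (.head (.route1 .BACK) (.head .wire_yes1 (.head (.route0 .BACK)
          (.head .wire_no0 (.head (.route1 .L) (.single .wire_no1))))))
    exact ⟨⟨swR, swR_bij, pu, fun t o h => path_unique (R := uEdge _ _) uEdge_det (uEdge_term _ _) h (pu t)⟩,
      ⟨idR, idR_bij, pe, fun t o h => path_unique (R := eEdge _ _) eEdge_det (eEdge_term _ _) h (pe t)⟩⟩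
  · -- (sw, id)
    have pu : ∀ t, Relation.ReflTransGen (uEdge swR idR) (inNode t) (outNode (swR t)) := by
      intro t; cases t
      · exact .head .wire_inL (.head (.route0 .L) (.single .wire_no0))
      · exact .head .wire_back (.head (.route1 .BACK) (.head .wire_no1 (.head (.route0 .BACK)
          (.head .wire_yes0 (.head (.route1 .L) (.single .wire_yes1))))))
    have pe : ∀ t, Relation.ReflTransGen (eEdge swR idR) (inNode t) (outNode (idR t)) := by
      intro t; cases t
      · exact .head .wire_inL (.head (.route0 .L) (.head .wire_no0 (.head (.route1 .L)
          (.head .wire_yes1 (.head (.route0 .BACK) (.single .wire_yes0))))))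
      · exact .head .wire_back (.head (.route1 .BACK) (.single .wire_no1))
    exact ⟨⟨swR, swR_bij, pu, fun t o h => path_unique (R := uEdge _ _) uEdge_det (uEdge_term _ _) h (pu t)⟩,
      ⟨idR, idR_bij, pe, fun t o h => path_unique (R := eEdge _ _) eEdge_det (eEdge_term _ _) h (pe t)⟩⟩
  · -- (sw, sw)
    have pu : ∀ t, Relation.ReflTransGen (uEdge swR swR) (inNode t) (outNode (swR t)) := by
      intro t; cases t
      · exact .head .wire_inL (.head (.route0 .L) (.single .wire_no0))
      · exact .head .wire_back (.head (.route1 .BACK) (.single .wire_yes1))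
    have pe : ∀ t, Relation.ReflTransGen (eEdge swR swR) (inNode t) (outNode (swR t)) := by
      intro t; cases t
      · exact .head .wire_inL (.head (.route0 .L) (.head .wire_no0 (.head (.route1 .L)
          (.single .wire_no1))))
      · exact .head .wire_back (.head (.route1 .BACK) (.head .wire_yes1 (.head (.route0 .BACK)
          (.single .wire_yes0))))
    exact ⟨⟨swR, swR_bij, pu, fun t o h => path_unique (R := uEdge _ _) uEdge_det (uEdge_term _ _) h (pu t)⟩,
      ⟨swR, swR_bij, pe, fun t o h => path_unique (R := eEdge _ _) eEdge_det (eEdge_term _ _) h (pe t)⟩⟩
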